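/- For an object M of an Abelian category, the following four conditions are equivalent: (P1 left) for every m ≥ 0 and every subobject N' ⊆ M^m there are k, l ≥ 0 and morphisms α : M^k → M^m, β : M^k → M^l such that N' is the image of the restriction of α to ker(β); (P2 left) every subobject of a power of M lies in the smallest class C of subobjects of powers of M such that (a) 0 ⊆ M^m and M^m ⊆ M^m lie in C for all m, (b) if N' ⊆ M^m lies in C and φ : M^m → M^k is a morphism then φ(N') ⊆ M^k lies in C, (c) if N' ⊆ M^k lies in C and φ : M^m → M^k is a morphism then φ^{-1}(N') ⊆ M^m lies in C; (P1 right) for every quotient M^m ↠ N there are k, l ≥ 0 and morphisms α : M^m → M^k, β : M^l → M^k such that N is the coimage of the composite M^m → M^k → coker(β); (P2 right) every quotient of a power of M lies in the smallest class C' of quotients of powers of M such that (a) M^m ↠ 0 and M^m ↠ M^m lie in C' for all m, (b) if M^k ↠ N lies in C' and φ : M^m → M^k is a morphism then the quotient M^m ↠ φ^{-1}(N) obtained from the epi-mono factorization of M^m → M^k → N lies in C', (c) if M^m ↠ N lies in C' and φ : M^m → M^k is a morphism then M^k ↠ φ(N), defined as the pushout of M^m ↠ N along φ, lies in C'. -/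

import Mathlib

set_option maxHeartbeats 1000000
set_option synthInstance.maxHeartbeats 400000

open CategoryTheory CategoryTheory.Limits ZeroObject

universe v u

attribute [local instance] CategoryTheory.Abelian.hasFiniteBiproducts

variable {A : Type u} [Category.{v} A] [Abelian A]

/-- The `m`-th power `M^m` of an object (`M^0 = 0`). -/
noncomputable abbrev pow (M : A) (m : ℕ) : A := ⨁ (fun _ : Fin m => M)

/-- (P1 left): for every subobject `N' ⊆ M^m` there are `k, l ≥ 0` and morphisms
`α : M^k ⟶ M^m`, `β : M^k ⟶ M^l` such that `N'` is the image of the restriction of `α`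
to `ker(β)`. -/
def P1Left (M : A) : Prop :=
  ∀ (m : ℕ) (N' : Subobject (pow M m)),
    ∃ (k l : ℕ) (α : pow M k ⟶ pow M m) (β : pow M k ⟶ pow M l),
      imageSubobject (kernel.ι β ≫ α) = N'

/-- The smallest class `C` of subobjects of powers of `M` containing `0 ⊆ M^m` and
`M^m ⊆ M^m`, and closed under images and preimages along morphisms between powers
of `M`. -/
inductive LeftClass (M : A) : ∀ m : ℕ, Subobject (pow M m) → Prop
  | bot (m : ℕ) : LeftClass M m ⊥
  | top (m : ℕ) : LeftClass M m ⊤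
  | img {m k : ℕ} (φ : pow M m ⟶ pow M k) {N : Subobject (pow M m)} :
      LeftClass M m N → LeftClass M k (imageSubobject (N.arrow ≫ φ))
  | preimg {m k : ℕ} (φ : pow M m ⟶ pow M k) {N : Subobject (pow M k)} :
      LeftClass M k N → LeftClass M m ((Subobject.pullback φ).obj N)

/-- (P2 left): every subobject of a power of `M` lies in the class `LeftClass M`. -/
def P2Left (M : A) : Prop :=
  ∀ (m : ℕ) (N' : Subobject (pow M m)), LeftClass M m N'

/-- (P1 right): for every quotient `q : M^m ↠ N` there are `k, l ≥ 0` and morphisms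
`α : M^m ⟶ M^k`, `β : M^l ⟶ M^k` such that `N` is the coimage of
`α' = α ≫ coker(β)`; in an Abelian category this says exactly that `q` and `α'` have the
same kernel subobject. -/
def P1Right (M : A) : Prop :=
  ∀ (m : ℕ) (N : A) (q : pow M m ⟶ N), Epi q →
    ∃ (k l : ℕ) (α : pow M m ⟶ pow M k) (β : pow M l ⟶ pow M k),
      kernelSubobject (α ≫ cokernel.π β) = kernelSubobject q

/-- The smallest class `C'` of quotients of powers of `M` (closed under isomorphism of
quotients) containing `M^m ↠ 0` and `M^m ↠ M^m`, and closed under the two operations: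
for a quotient `q : M^k ↠ N` and `φ : M^m ⟶ M^k` the quotient `M^m ↠ φ⁻¹(N)` obtained
from the epi-mono factorization of `φ ≫ q`, and for a quotient `q : M^m ↠ N` and
`φ : M^m ⟶ M^k` the quotient `M^k ↠ φ(N)` obtained as the pushout of `q` along `φ`. -/
inductive RightClass (M : A) : ∀ m : ℕ, ∀ N : A, (pow M m ⟶ N) → Prop
  | zero (m : ℕ) : RightClass M m 0 0
  | id (m : ℕ) : RightClass M m (pow M m) (𝟙 (pow M m))
  | preimg {k : ℕ} {N : A} {q : pow M k ⟶ N} (hq : RightClass M k N q)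
      {m : ℕ} (φ : pow M m ⟶ pow M k) :
      RightClass M m (image (φ ≫ q)) (factorThruImage (φ ≫ q))
  | push {m : ℕ} {N : A} {q : pow M m ⟶ N} (hq : RightClass M m N q)
      {k : ℕ} (φ : pow M m ⟶ pow M k) :
      RightClass M k (pushout q φ) (pushout.inr q φ)
  | iso {m : ℕ} {N N' : A} {q : pow M m ⟶ N} (hq : RightClass M m N q) (e : N ≅ N') :
      RightClass M m N' (q ≫ e.hom)

/-- (P2 right): every quotient of a power of `M` lies in the class `RightClass M`. -/
def P2Right (M : A) : Prop :=
  ∀ (m : ℕ) (N : A) (q : pow M m ⟶ N), Epi q → RightClass M m N q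

/-!
Both left-hand conditions concern the subobjects of powers of `M` of the shape `α(ker β)`,
equivalently `φ⁻¹(im ψ)`: the two shapes are exchanged through the identities
`inl⁻¹(im (α, β)) = α(ker β)` and `φ⁻¹(im ψ) = pr₁(ker (φ, -ψ))` on `M^m ⊞ M^l ≅ M^(m+l)`.
The first shape is stable under images and the second under preimages, so these subobjects
form a class containing `0` and `M^m` closed under both operations; conversely
`α(ker β)` is obtained from `0` by one preimage and one image.
The right-hand conditions are the same statements about kernels of quotients, since
`ker (α ≫ coker β) = α⁻¹(im β)`, the kernel of the pushout of `q` along `φ` is `φ(ker q)`,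
and an epimorphism is determined up to isomorphism by its kernel.
-/

theorem CategoryTheory.Subobject.eq_of_factors_iff {C : Type*} [Category C] {X : C}
    {P Q : Subobject X} (h : ∀ (W : C) (t : W ⟶ X), P.Factors t ↔ Q.Factors t) : P = Q :=
  le_antisymm (Subobject.le_of_factors ((h _ _).mp P.factors_self))
    (Subobject.le_of_factors ((h _ _).mpr Q.factors_self))

section Subobjects

variable {V W X Y Z : A}

theorem CategoryTheory.Subobject.factors_of_epi_comp (e : W ⟶ X) [Epi e] {g : X ⟶ Y}
    {P : Subobject Y} (h : P.Factors (e ≫ g)) : P.Factors g := by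
  have := strongEpi_of_epi e
  have sq : CommSq (P.factorThru _ h) e P.arrow g := ⟨by simp⟩
  exact (Subobject.factors_iff _ _).mpr ⟨sq.lift, sq.fac_right⟩

theorem imageSubobject_le_iff (f : X ⟶ Y) (P : Subobject Y) :
    imageSubobject f ≤ P ↔ P.Factors f :=
  ⟨fun h => Subobject.factors_of_le f h
      (by simpa using imageSubobject_factors_comp_self f (𝟙 X)),
    fun h => imageSubobject_le f (P.factorThru f h) (by simp)⟩

theorem imageSubobject_factors_iff (f : X ⟶ Y) (t : W ⟶ Y) :
    (imageSubobject f).Factors t ↔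
      ∃ (V : A) (e : V ⟶ W) (_ : Epi e) (h : V ⟶ X), e ≫ t = h ≫ f := by
  constructor
  · intro ht
    refine ⟨pullback (factorThruImageSubobject f) ((imageSubobject f).factorThru t ht),
      pullback.snd _ _, inferInstance, pullback.fst _ _, ?_⟩
    simpa using (pullback.condition (f := factorThruImageSubobject f)
      (g := (imageSubobject f).factorThru t ht) =≫ (imageSubobject f).arrow).symm
  · rintro ⟨V, e, _, h, w⟩
    exact Subobject.factors_of_epi_comp e (w ▸ imageSubobject_factors_comp_self f h)

theorem imageSubobject_comp_of_epi (e : W ⟶ X) [Epi e] (f : X ⟶ Y) :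
    imageSubobject (e ≫ f) = imageSubobject f :=
  le_antisymm (imageSubobject_comp_le e f) ((imageSubobject_le_iff _ _).mpr
    (Subobject.factors_of_epi_comp e ((imageSubobject_le_iff _ _).mp le_rfl)))

theorem imageSubobject_arrow_comp_eq (f : X ⟶ Y) (g : Y ⟶ Z) :
    imageSubobject ((imageSubobject f).arrow ≫ g) = imageSubobject (f ≫ g) := by
  rw [← imageSubobject_comp_of_epi (factorThruImageSubobject f),
    imageSubobject_arrow_comp_assoc]

theorem imageSubobject_kernel_ι_comp (f : X ⟶ Y) (g : X ⟶ Z) :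
    imageSubobject (kernel.ι f ≫ g) = imageSubobject ((kernelSubobject f).arrow ≫ g) := by
  rw [← kernelSubobject_arrow', Category.assoc, imageSubobject_iso_comp]

theorem pullback_imageSubobject_comp_mono (g : W ⟶ Y) (i : Y ⟶ Z) [Mono i] :
    (Subobject.pullback i).obj (imageSubobject (g ≫ i)) = imageSubobject g :=
  Subobject.eq_of_factors_iff fun _ t => by
    simp only [pullback_factors_iff, imageSubobject_factors_iff, ← Category.assoc,
      cancel_mono]

theorem pullback_bot (f : X ⟶ Y) : (Subobject.pullback f).obj ⊥ = kernelSubobject f :=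
  Subobject.eq_of_factors_iff fun _ t => by
    rw [pullback_factors_iff, Subobject.bot_factors_iff_zero, kernelSubobject_factors_iff]

theorem kernelSubobject_comp (f : X ⟶ Y) (g : Y ⟶ Z) :
    kernelSubobject (f ≫ g) = (Subobject.pullback f).obj (kernelSubobject g) :=
  Subobject.eq_of_factors_iff fun _ t => by
    rw [pullback_factors_iff, kernelSubobject_factors_iff, kernelSubobject_factors_iff,
      Category.assoc]

theorem kernelSubobject_cokernel_π (f : X ⟶ Y) :
    kernelSubobject (cokernel.π f) = imageSubobject f :=
  Subobject.mk_eq_mk_of_comm _ _ (Abelian.imageIsoImage f)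
    (Abelian.imageIsoImage_hom_comp_image_ι f)

theorem kernelSubobject_factorThruImage (f : X ⟶ Y) :
    kernelSubobject (factorThruImage f) = kernelSubobject f := by
  simpa using (kernelSubobject_comp_mono (factorThruImage f) (image.ι f)).symm

theorem pullback_inl_imageSubobject_lift (α : V ⟶ X) (β : V ⟶ Y) :
    (Subobject.pullback (biprod.inl : X ⟶ X ⊞ Y)).obj (imageSubobject (biprod.lift α β)) =
      imageSubobject (kernel.ι β ≫ α) :=
  Subobject.eq_of_factors_iff fun _ t => by
    rw [pullback_factors_iff, imageSubobject_factors_iff, imageSubobject_factors_iff]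
    constructor
    · rintro ⟨U, e, _, h, w⟩
      have hβ : h ≫ β = 0 := by simpa using (w =≫ biprod.snd).symm
      exact ⟨U, e, ‹_›, kernel.lift β h hβ, by simpa using w =≫ biprod.fst⟩
    · rintro ⟨U, e, _, h, w⟩
      refine ⟨U, e, ‹_›, h ≫ kernel.ι β, ?_⟩
      ext <;> simp [reassoc_of% w]

theorem imageSubobject_kernel_ι_desc_fst (φ : X ⟶ Z) (ψ : Y ⟶ Z) :
    imageSubobject (kernel.ι (biprod.desc φ (-ψ)) ≫ biprod.fst) =
      (Subobject.pullback φ).obj (imageSubobject ψ) :=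
  Subobject.eq_of_factors_iff fun _ t => by
    rw [pullback_factors_iff, imageSubobject_factors_iff, imageSubobject_factors_iff]
    constructor
    · rintro ⟨U, e, _, h, w⟩
      have hk : kernel.ι (biprod.desc φ (-ψ)) ≫ biprod.fst ≫ φ =
          kernel.ι (biprod.desc φ (-ψ)) ≫ biprod.snd ≫ ψ := by
        rw [← sub_eq_zero, ← Preadditive.comp_sub]
        convert kernel.condition (biprod.desc φ (-ψ)) using 2
        ext <;> simp
      exact ⟨U, e, ‹_›, h ≫ kernel.ι _ ≫ biprod.snd, by simp [reassoc_of% w, hk]⟩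
    · rintro ⟨U, e, _, h, w⟩
      exact ⟨U, e, ‹_›, kernel.lift _ (biprod.lift (e ≫ t) h) (by simp [w]), by simp⟩

theorem imageSubobject_kernel_ι_iso_comp (j : W ≅ X) (f : X ⟶ Y) (g : X ⟶ Z) :
    imageSubobject (kernel.ι (j.hom ≫ f) ≫ j.hom ≫ g) = imageSubobject (kernel.ι f ≫ g) := by
  have h : kernel.ι (j.hom ≫ f) ≫ j.hom = (kernelIsIsoComp j.hom f).hom ≫ kernel.ι f := by
    simp
  rw [← Category.assoc, h, Category.assoc, imageSubobject_iso_comp]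

end Subobjects

section Quotients

variable {X Y Z N : A}

theorem kernel_ι_comp_eq_zero_of_le {f : X ⟶ Y} {g : X ⟶ Z}
    (h : kernelSubobject f ≤ kernelSubobject g) : kernel.ι f ≫ g = 0 := by
  rw [← kernelSubobject_arrow', Category.assoc, (kernelSubobject_factors_iff g _).mp
    (Subobject.factors_of_le _ h (Subobject.factors_self _)), comp_zero]

theorem exists_iso_of_kernelSubobject_eq {N₁ N₂ : A} (q₁ : X ⟶ N₁) (q₂ : X ⟶ N₂)
    [Epi q₁] [Epi q₂] (h : kernelSubobject q₁ = kernelSubobject q₂) :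
    ∃ e : N₁ ≅ N₂, q₁ ≫ e.hom = q₂ :=
  ⟨{ hom := Abelian.epiDesc q₁ q₂ (kernel_ι_comp_eq_zero_of_le h.le)
     inv := Abelian.epiDesc q₂ q₁ (kernel_ι_comp_eq_zero_of_le h.ge)
     hom_inv_id := by simp [← cancel_epi q₁]
     inv_hom_id := by simp [← cancel_epi q₂] },
    Abelian.comp_epiDesc _ _ _⟩

noncomputable def pushoutIsoCokernel (q : X ⟶ N) [Epi q] (φ : X ⟶ Y) :
    pushout q φ ≅ cokernel (kernel.ι q ≫ φ) where
  hom := pushout.desc (Abelian.epiDesc q (φ ≫ cokernel.π (kernel.ι q ≫ φ))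
      (by rw [← Category.assoc]; exact cokernel.condition _))
    (cokernel.π _) (by rw [Abelian.comp_epiDesc])
  inv := cokernel.desc _ (pushout.inr q φ)
    (by rw [Category.assoc, ← pushout.condition, kernel.condition_assoc, zero_comp])
  hom_inv_id := by
    apply pushout.hom_ext
    · rw [pushout.inl_desc_assoc, Category.comp_id, ← cancel_epi q,
        Abelian.comp_epiDesc_assoc, Category.assoc, cokernel.π_desc, pushout.condition]
    · rw [pushout.inr_desc_assoc, cokernel.π_desc, Category.comp_id]
  inv_hom_id := by
    apply coequalizer.hom_ext
    rw [cokernel.π_desc_assoc, pushout.inr_desc, Category.comp_id]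

theorem kernelSubobject_pushout_inr (q : X ⟶ N) [Epi q] (φ : X ⟶ Y) :
    kernelSubobject (pushout.inr q φ) = imageSubobject ((kernelSubobject q).arrow ≫ φ) := by
  have h : pushout.inr q φ ≫ (pushoutIsoCokernel q φ).hom = cokernel.π (kernel.ι q ≫ φ) := by
    simp [pushoutIsoCokernel, pushout.inr_desc]
  rw [← imageSubobject_kernel_ι_comp, ← kernelSubobject_cokernel_π, ← h,
    kernelSubobject_comp_mono]

end Quotients

noncomputable def powAddIso (M : A) (k l : ℕ) : pow M k ⊞ pow M l ≅ pow M (k + l) where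
  hom := biproduct.lift (Fin.addCases (fun i => biprod.fst ≫ biproduct.π _ i)
    (fun i => biprod.snd ≫ biproduct.π _ i))
  inv := biprod.lift (biproduct.lift fun i => biproduct.π _ (Fin.castAdd l i))
    (biproduct.lift fun i => biproduct.π _ (Fin.natAdd k i))
  hom_inv_id := by
    apply biprod.hom_ext <;> ext j i <;> simp
  inv_hom_id := by
    ext j
    induction j using Fin.addCases <;> simp

section Forms

variable (M : A) {X Y : A}

def IsImageOfKernel (N : Subobject X) : Prop :=
  ∃ (k l : ℕ) (α : pow M k ⟶ X) (β : pow M k ⟶ pow M l),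
    imageSubobject (kernel.ι β ≫ α) = N

def IsPreimageOfImage (N : Subobject X) : Prop :=
  ∃ (k l : ℕ) (φ : X ⟶ pow M k) (ψ : pow M l ⟶ pow M k),
    (Subobject.pullback φ).obj (imageSubobject ψ) = N

variable {M}

theorem IsImageOfKernel.image {N : Subobject X} (h : IsImageOfKernel M N) (f : X ⟶ Y) :
    IsImageOfKernel M (imageSubobject (N.arrow ≫ f)) := by
  obtain ⟨k, l, α, β, rfl⟩ := h
  exact ⟨k, l, α ≫ f, β, by rw [imageSubobject_arrow_comp_eq, Category.assoc]⟩

theorem IsPreimageOfImage.pullback {N : Subobject X} (h : IsPreimageOfImage M N) (f : Y ⟶ X) :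
    IsPreimageOfImage M ((Subobject.pullback f).obj N) := by
  obtain ⟨k, l, φ, ψ, rfl⟩ := h
  exact ⟨k, l, f ≫ φ, ψ, Subobject.pullback_comp f φ _⟩

theorem isPreimageOfImage_iff_isImageOfKernel {m : ℕ} (N : Subobject (pow M m)) :
    IsPreimageOfImage M N ↔ IsImageOfKernel M N := by
  constructor
  · rintro ⟨c, l, φ, ψ, rfl⟩
    let e := (powAddIso M m l).symm
    exact ⟨m + l, c, e.hom ≫ biprod.fst, e.hom ≫ biprod.desc φ (-ψ),
      (imageSubobject_kernel_ι_iso_comp e _ _).trans (imageSubobject_kernel_ι_desc_fst φ ψ)⟩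
  · rintro ⟨k, l, α, β, rfl⟩
    let e := powAddIso M m l
    refine ⟨m + l, k, biprod.inl ≫ e.hom, biprod.lift α β ≫ e.hom, ?_⟩
    rw [Subobject.pullback_comp, pullback_imageSubobject_comp_mono,
      pullback_inl_imageSubobject_lift]

theorem IsImageOfKernel.pullback {m n : ℕ} {N : Subobject (pow M m)} (h : IsImageOfKernel M N)
    (f : pow M n ⟶ pow M m) : IsImageOfKernel M ((Subobject.pullback f).obj N) :=
  (isPreimageOfImage_iff_isImageOfKernel _).mp
    (((isPreimageOfImage_iff_isImageOfKernel N).mpr h).pullback f)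

theorem IsPreimageOfImage.image {m n : ℕ} {N : Subobject (pow M m)} (h : IsPreimageOfImage M N)
    (f : pow M m ⟶ pow M n) : IsPreimageOfImage M (imageSubobject (N.arrow ≫ f)) :=
  (isPreimageOfImage_iff_isImageOfKernel _).mpr
    (((isPreimageOfImage_iff_isImageOfKernel N).mp h).image f)

end Forms

section LeftClass

variable {M : A}

theorem leftClass_iff_isImageOfKernel {m : ℕ} (N : Subobject (pow M m)) :
    LeftClass M m N ↔ IsImageOfKernel M N := by
  constructor
  · intro h
    induction h with
    | bot m => exact ⟨m, m, 0, 0, by simp⟩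
    | top m =>
      exact ⟨m, m, 𝟙 _, 0, by simp [imageSubobject_mono, Subobject.mk_eq_top_of_isIso]⟩
    | img φ _ ih => exact ih.image φ
    | preimg φ _ ih => exact ih.pullback φ
  · rintro ⟨k, l, α, β, rfl⟩
    have hker : LeftClass M k (kernelSubobject β) := pullback_bot β ▸ LeftClass.preimg β (.bot l)
    rw [imageSubobject_kernel_ι_comp]
    exact hker.img α

end LeftClass

section RightClass

variable {M : A}

theorem RightClass.epi {m : ℕ} {N : A} {q : pow M m ⟶ N} (h : RightClass M m N q) : Epi q := by
  induction h with
  | zero => exact (isZero_zero A).epi _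
  | id => infer_instance
  | preimg => infer_instance
  | push => infer_instance
  | iso => exact epi_comp _ _

theorem RightClass.isPreimageOfImage_kernelSubobject {m : ℕ} {N : A} {q : pow M m ⟶ N}
    (h : RightClass M m N q) : IsPreimageOfImage M (kernelSubobject q) := by
  induction h with
  | zero m => exact ⟨m, m, 𝟙 _, 𝟙 _, by
      rw [kernelSubobject_zero, imageSubobject_mono, Subobject.mk_eq_top_of_isIso,
        Subobject.pullback_top]⟩
  | id m => exact ⟨m, 0, 𝟙 _, 0, by rw [imageSubobject_zero, pullback_bot]⟩
  | preimg _ φ ih =>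
    rw [kernelSubobject_factorThruImage, kernelSubobject_comp]
    exact ih.pullback φ
  | push hq φ ih =>
    have := hq.epi
    rw [kernelSubobject_pushout_inr]
    exact ih.image φ
  | iso _ _ ih => rwa [kernelSubobject_comp_mono]

/-- `φ⁻¹(im ψ)` is the kernel of the quotient obtained from `M^l ↠ 0` by pushing out
along `ψ` and then pulling back along `φ`. -/
theorem rightClass_of_isPreimageOfImage {m : ℕ} {N : A} (q : pow M m ⟶ N) [Epi q]
    (h : IsPreimageOfImage M (kernelSubobject q)) : RightClass M m N q := by
  obtain ⟨k, l, φ, ψ, hq⟩ := h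
  have : Epi (0 : pow M l ⟶ 0) := (isZero_zero A).epi _
  have hker : kernelSubobject (φ ≫ pushout.inr (0 : pow M l ⟶ 0) ψ) = kernelSubobject q := by
    rw [kernelSubobject_comp, kernelSubobject_pushout_inr, ← imageSubobject_kernel_ι_comp,
      imageSubobject_comp_of_epi, hq]
  obtain ⟨e, he⟩ := exists_iso_of_kernelSubobject_eq _ q
    ((kernelSubobject_factorThruImage _).trans hker)
  exact he ▸ (((RightClass.zero l).push ψ).preimg φ).iso e

theorem rightClass_iff_isPreimageOfImage {m : ℕ} {N : A} (q : pow M m ⟶ N) [Epi q] :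
    RightClass M m N q ↔ IsPreimageOfImage M (kernelSubobject q) :=
  ⟨RightClass.isPreimageOfImage_kernelSubobject, rightClass_of_isPreimageOfImage q⟩

end RightClass

theorem forall_kernelSubobject_of_epi_iff {X : A} (p : Subobject X → Prop) :
    (∀ (N : A) (q : X ⟶ N), Epi q → p (kernelSubobject q)) ↔ ∀ K : Subobject X, p K :=
  ⟨fun h K => by
    simpa [kernelSubobject_cokernel_π, imageSubobject_mono] using
      h _ (cokernel.π K.arrow) inferInstance,
    fun h _ _ _ => h _⟩

section Principality

variable (M : A)

theorem p2Left_iff_p1Left : P2Left M ↔ P1Left M :=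
  forall₂_congr fun _ => leftClass_iff_isImageOfKernel

theorem p1Right_iff_forall_isPreimageOfImage :
    P1Right M ↔ ∀ (m : ℕ) (N : Subobject (pow M m)), IsPreimageOfImage M N := by
  refine forall_congr' fun m => ?_
  rw [← forall_kernelSubobject_of_epi_iff]
  simp only [IsPreimageOfImage, kernelSubobject_comp, kernelSubobject_cokernel_π]

theorem p2Right_iff_forall_isPreimageOfImage :
    P2Right M ↔ ∀ (m : ℕ) (N : Subobject (pow M m)), IsPreimageOfImage M N := by
  refine forall_congr' fun m => ?_
  rw [← forall_kernelSubobject_of_epi_iff]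
  exact forall₃_congr fun _ q _ => rightClass_iff_isPreimageOfImage q

theorem p1Left_iff_p1Right : P1Left M ↔ P1Right M :=
  (forall₂_congr fun _ => isPreimageOfImage_iff_isImageOfKernel).symm.trans
    (p1Right_iff_forall_isPreimageOfImage M).symm

end Principality

/-- **(Definition `DEFWP`.)** For an object `M` of an Abelian category the four
conditions (P1 left), (P2 left), (P1 right) and (P2 right) are equivalent. -/
theorem principality_conditions_equivalent (M : A) :
    (P1Left M ↔ P2Left M) ∧ (P2Left M ↔ P1Right M) ∧ (P1Right M ↔ P2Right M) :=
  ⟨(p2Left_iff_p1Left M).symm, (p2Left_iff_p1Left M).trans (p1Left_iff_p1Right M),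
    (p1Right_iff_forall_isPreimageOfImage M).trans
      (p2Right_iff_forall_isPreimageOfImage M).symm⟩
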